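/- arXiv:2512.07460 — 3 statements merged into one kernel-verified Lean document; each statement's English description precedes it below -/
import Mathlib

section
/- Let (M, ω_M) and (N, ω_N) be Hermitian manifolds of complex dimensions m and n, and let F : (M; x₀) → (N; F(x₀)) be a germ of holomorphic map satisfying F^* ω_N^p = λ ω_M^p for some real λ > 0 and some integer p with 1 ≤ p < m. Then F^* ω_N = λ^{1/p} ω_M, i.e. F is a germ of holomorphic isometry from (M, λ^{1/p} g_M) into (N, g_N). -/
open scoped Classical ComplexOrder
open Complex Set

noncomputable section

/-- Holomorphic Jacobian entry ∂F_i/∂w_l at w. -/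
def Jac {m : ℕ} {ι : Type*} (F : (Fin m → ℂ) → ι → ℂ) (w : Fin m → ℂ) (i : ι) (l : Fin m) : ℂ :=
  fderiv ℂ (fun w' => F w' i) w (Pi.single l 1)

/-- A Hermitian metric on an open set `U` of the coordinate space `ι → ℂ`, given by its matrix of
coefficients `g_{i j̄}`: Hermitian, positive definite and smooth on `U`. -/
structure HermMetricOn {ι : Type*} [Fintype ι] [DecidableEq ι] (U : Set (ι → ℂ)) where
  g : (ι → ℂ) → Matrix ι ι ℂ
  isHermitian : ∀ z ∈ U, (g z).IsHermitian
  posDef : ∀ z ∈ U, (g z).PosDef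
  smooth : ∀ i j, ContDiffOn ℝ (⊤ : ℕ∞) (fun z => g z i j) U

/-- The matrix of coefficients of the pullback `F^*ω_N` of the Hermitian form with matrix `gN`
under a holomorphic map `F`:  `(F^*ω_N)_{l k̄} = Σ_{i,j} (g_N)_{i j̄}(F w) ∂F_i/∂w_l conj(∂F_j/∂w_k)`. -/
def pullbackMetric {m : ℕ} {ι : Type*} [Fintype ι]
    (gN : (ι → ℂ) → Matrix ι ι ℂ) (F : (Fin m → ℂ) → ι → ℂ) (w : Fin m → ℂ) :
    Matrix (Fin m) (Fin m) ℂ :=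
  Matrix.of fun l k => ∑ i, ∑ j, gN (F w) i j * Jac F w i l * (starRingEnd ℂ) (Jac F w j k)

/-- `F^*ω_N^p = λ ω_M^p` on `V`, expressed in coordinates: all corresponding `p×p` minors
(the coefficients of the two (p,p)-forms on increasing multi-indices) agree up to the factor λ. -/
def PreservesPP {m : ℕ} {ι : Type*} [Fintype ι]
    (gM : (Fin m → ℂ) → Matrix (Fin m) (Fin m) ℂ) (gN : (ι → ℂ) → Matrix ι ι ℂ)
    (F : (Fin m → ℂ) → ι → ℂ) (V : Set (Fin m → ℂ)) (p : ℕ) (lam : ℝ) : Prop :=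
  ∀ w ∈ V, ∀ L K : Fin p → Fin m, StrictMono L → StrictMono K →
    ((pullbackMetric gN F w).submatrix L K).det = (lam : ℂ) * ((gM w).submatrix L K).det

/-- Wirtinger derivative ∂/∂z_k of a function of several complex variables. -/
def wdz {ι : Type*} [Fintype ι] [DecidableEq ι] (k : ι) (f : (ι → ℂ) → ℂ) (z : ι → ℂ) : ℂ :=
  (fderiv ℝ f z (Pi.single k 1) - Complex.I * fderiv ℝ f z (Pi.single k Complex.I)) / 2

/-- Conjugate Wirtinger derivative ∂/∂z̄_k. -/
def wdzbar {ι : Type*} [Fintype ι] [DecidableEq ι] (k : ι) (f : (ι → ℂ) → ℂ) (z : ι → ℂ) : ℂ :=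
  (fderiv ℝ f z (Pi.single k 1) + Complex.I * fderiv ℝ f z (Pi.single k Complex.I)) / 2


/-! ### Auxiliary linear-algebra lemmas -/

section Aux

open Matrix

/-- Any injective map from `Fin p` to a linear order factors as a strictly monotone map
composed with a permutation. -/
lemma exists_strictMono_comp_perm {p m : ℕ} (f : Fin p → Fin m) (hf : Function.Injective f) :
    ∃ (σ : Equiv.Perm (Fin p)) (g : Fin p → Fin m), StrictMono g ∧ f = g ∘ σ := by
  classical
  set s : Finset (Fin m) := Finset.univ.image f with hs
  have hcard : s.card = p := by
    rw [hs, Finset.card_image_of_injective _ hf, Finset.card_univ, Fintype.card_fin]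
  set e := s.orderIsoOfFin hcard with he
  set g : Fin p → Fin m := fun i => (e i : Fin m) with hg
  have hgmono : StrictMono g := fun i j hij => by
    exact_mod_cast e.strictMono hij
  have hmem : ∀ i, f i ∈ s := fun i => Finset.mem_image_of_mem f (Finset.mem_univ i)
  set σ' : Fin p → Fin p := fun i => e.symm ⟨f i, hmem i⟩ with hσ'
  have hgσ : ∀ i, g (σ' i) = f i := fun i => by
    simp [hg, hσ']
  have hσinj : Function.Injective σ' := by
    intro a b hab
    apply hf
    rw [← hgσ a, ← hgσ b, hab]
  refine ⟨Equiv.ofBijective σ' (Finite.injective_iff_bijective.mp hσinj), g, hgmono, ?_⟩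
  funext i
  simp [Equiv.ofBijective, hgσ i]

/-- The minor identity extends from strictly monotone index maps to injective ones. -/
lemma minors_inj {m p : ℕ} (A G : Matrix (Fin m) (Fin m) ℂ) (lam : ℂ)
    (h : ∀ L K : Fin p → Fin m, StrictMono L → StrictMono K →
      (A.submatrix L K).det = lam * (G.submatrix L K).det) :
    ∀ L K : Fin p → Fin m, Function.Injective L → Function.Injective K →
      (A.submatrix L K).det = lam * (G.submatrix L K).det := by
  intro L K hL hK
  obtain ⟨σ, L₀, hL₀, rfl⟩ := exists_strictMono_comp_perm L hL
  obtain ⟨τ, K₀, hK₀, rfl⟩ := exists_strictMono_comp_perm K hK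
  have key : ∀ M : Matrix (Fin m) (Fin m) ℂ,
      (M.submatrix (L₀ ∘ σ) (K₀ ∘ τ)).det
        = (Equiv.Perm.sign σ : ℂ) * ((Equiv.Perm.sign τ : ℂ) * (M.submatrix L₀ K₀).det) := by
    intro M
    have h1 : M.submatrix (L₀ ∘ σ) (K₀ ∘ τ)
        = ((M.submatrix L₀ K₀).submatrix (⇑σ) id).submatrix id ⇑τ := by
      simp [Matrix.submatrix_submatrix]
    rw [h1, Matrix.det_permute', Matrix.det_permute]; ring
  rw [key A, key G, h L₀ K₀ hL₀ hK₀]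
  ring

/-- the `p×p` matrix of pairings `Xᵢ ⬝ A Yⱼ`. -/
def pairMat {m p : ℕ} (A : Matrix (Fin m) (Fin m) ℂ) (X Y : Fin p → (Fin m → ℂ)) :
    Matrix (Fin p) (Fin p) ℂ :=
  Matrix.of fun i j => X i ⬝ᵥ (A *ᵥ Y j)

lemma pairMat_basis {m p : ℕ} (A : Matrix (Fin m) (Fin m) ℂ) (L K : Fin p → Fin m) :
    pairMat A (fun i => Pi.single (L i) 1) (fun j => Pi.single (K j) 1) = A.submatrix L K := by
  ext i j
  simp [pairMat, single_dotProduct, Matrix.mulVec_single]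

/-- `y ↦ (i ↦ Xᵢ ⬝ A y)` as a linear map. -/
def colMapL {m p : ℕ} (A : Matrix (Fin m) (Fin m) ℂ) (X : Fin p → (Fin m → ℂ)) :
    (Fin m → ℂ) →ₗ[ℂ] (Fin p → ℂ) where
  toFun y := fun i => X i ⬝ᵥ (A *ᵥ y)
  map_add' y z := by funext i; simp [Matrix.mulVec_add, dotProduct_add]
  map_smul' c y := by funext i; simp [Matrix.mulVec_smul, dotProduct_smul]

/-- `x ↦ (j ↦ x ⬝ A Yⱼ)` as a linear map. -/
def rowMapL {m p : ℕ} (A : Matrix (Fin m) (Fin m) ℂ) (Y : Fin p → (Fin m → ℂ)) :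
    (Fin m → ℂ) →ₗ[ℂ] (Fin p → ℂ) where
  toFun x := fun j => x ⬝ᵥ (A *ᵥ Y j)
  map_add' x z := by funext j; simp [add_dotProduct]
  map_smul' c x := by funext j; simp [smul_dotProduct]

lemma detRow_apply {p : ℕ} (v : Fin p → (Fin p → ℂ)) :
    Matrix.detRowAlternating v = (Matrix.of v).det := rfl

lemma pairMat_det_col {m p : ℕ} (A : Matrix (Fin m) (Fin m) ℂ) (X Y : Fin p → (Fin m → ℂ)) :
    (Matrix.detRowAlternating.compLinearMap (colMapL A X)) Y = (pairMat A X Y).det := by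
  rw [AlternatingMap.compLinearMap_apply, detRow_apply, ← Matrix.det_transpose]
  congr 1

lemma pairMat_det_row {m p : ℕ} (A : Matrix (Fin m) (Fin m) ℂ) (X Y : Fin p → (Fin m → ℂ)) :
    (Matrix.detRowAlternating.compLinearMap (rowMapL A Y)) X = (pairMat A X Y).det := by
  rw [AlternatingMap.compLinearMap_apply, detRow_apply]
  congr 1

/-- From the identity on minors with injective indices to the identity for all tuples of
vectors. -/
lemma pair_det_all {m p : ℕ} (A G : Matrix (Fin m) (Fin m) ℂ) (lam : ℂ)
    (h : ∀ L K : Fin p → Fin m, Function.Injective L → Function.Injective K →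
      (A.submatrix L K).det = lam * (G.submatrix L K).det) :
    ∀ X Y : Fin p → (Fin m → ℂ), (pairMat A X Y).det = lam * (pairMat G X Y).det := by
  have hbasis : ∀ i : Fin m, (Pi.basisFun ℂ (Fin m)) i = Pi.single i 1 := by
    intro i; funext j; simp [Pi.basisFun_apply]
  -- Step 1: for X a tuple of basis vectors with injective indices, all Y.
  have step1 : ∀ L : Fin p → Fin m, Function.Injective L →
      ∀ Y : Fin p → (Fin m → ℂ),
        (pairMat A (fun i => Pi.single (L i) 1) Y).det
          = lam * (pairMat G (fun i => Pi.single (L i) 1) Y).det := by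
    intro L hL Y
    set X : Fin p → (Fin m → ℂ) := fun i => Pi.single (L i) 1 with hX
    have key : Matrix.detRowAlternating.compLinearMap (colMapL A X)
        = lam • Matrix.detRowAlternating.compLinearMap (colMapL G X) := by
      refine Module.Basis.ext_alternating (Pi.basisFun ℂ (Fin m)) ?_
      intro K hK
      have h3 : (fun i => (Pi.basisFun ℂ (Fin m)) (K i)) = fun i => Pi.single (K i) 1 := by
        funext i; rw [hbasis]
      rw [h3]
      simp only [AlternatingMap.smul_apply, pairMat_det_col, smul_eq_mul]
      rw [pairMat_basis, pairMat_basis]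
      exact h L K hL hK
    have h2 := congrArg (fun f => f Y) key
    simp only [AlternatingMap.smul_apply, pairMat_det_col, smul_eq_mul] at h2
    exact h2
  -- Step 2: all X, Y.
  intro X Y
  have key : Matrix.detRowAlternating.compLinearMap (rowMapL A Y)
      = lam • Matrix.detRowAlternating.compLinearMap (rowMapL G Y) := by
    refine Module.Basis.ext_alternating (Pi.basisFun ℂ (Fin m)) ?_
    intro L hL
    have h3 : (fun i => (Pi.basisFun ℂ (Fin m)) (L i)) = fun i => Pi.single (L i) 1 := by
      funext i; rw [hbasis]
    rw [h3]
    simp only [AlternatingMap.smul_apply, pairMat_det_row, smul_eq_mul]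
    exact step1 L hL Y
  have h2 := congrArg (fun f => f X) key
  simp only [AlternatingMap.smul_apply, pairMat_det_row, smul_eq_mul] at h2
  exact h2

/-- Pairing conjugated columns of `M` against columns of `M` computes `Mᴴ A M`. -/
lemma pair_cols {m : ℕ} (A M : Matrix (Fin m) (Fin m) ℂ) (a b : Fin m) :
    (star (Mᵀ a)) ⬝ᵥ (A *ᵥ (Mᵀ b)) = (Mᴴ * A * M) a b := by
  simp only [Matrix.mul_apply, dotProduct, Matrix.mulVec, dotProduct,
    Matrix.conjTranspose_apply, Matrix.transpose_apply, Pi.star_apply, RCLike.star_def,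
    Finset.sum_mul, Finset.mul_sum]
  rw [Finset.sum_comm]
  congr 1; funext r; congr 1; funext s; ring

open scoped MatrixOrder in
/-- The core linear-algebra fact: if `A` is positive semidefinite, `G` is positive definite
and all `p×p` minors of `A` (on increasing multi-indices) are `lam` times those of `G` with
`1 ≤ p < m`, then `A = lam^{1/p} • G`. -/
lemma core_lemma {m : ℕ} (A G : Matrix (Fin m) (Fin m) ℂ) (hA : A.PosSemidef) (hG : G.PosDef)
    (p : ℕ) (hp : 1 ≤ p) (hpm : p < m) (lam : ℝ) (hlam : 0 < lam)
    (h : ∀ L K : Fin p → Fin m, StrictMono L → StrictMono K →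
      (A.submatrix L K).det = (lam : ℂ) * (G.submatrix L K).det) :
    A = ((lam ^ (1 / (p : ℝ)) : ℝ) : ℂ) • G := by
  -- square root of G
  set R := CFC.sqrt G with hRdef
  have hRR : R * R = G := CFC.sqrt_mul_sqrt_self G hG.posSemidef.nonneg
  have hRH : R.IsHermitian := (CFC.sqrt_nonneg G).posSemidef.isHermitian
  have hdetG : IsUnit G.det := by
    have := hG.det_pos
    simp only [isUnit_iff_ne_zero]
    exact_mod_cast ne_of_gt this
  have hdetR : IsUnit R.det := by
    have : R.det * R.det = G.det := by rw [← Matrix.det_mul, hRR]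
    rcases hdetG with ⟨u, hu⟩
    exact isUnit_of_mul_isUnit_left (this ▸ (hu ▸ u.isUnit))
  have hRRi : R * R⁻¹ = 1 := Matrix.mul_nonsing_inv R hdetR
  have hRiR : R⁻¹ * R = 1 := Matrix.nonsing_inv_mul R hdetR
  have hRiH : (R⁻¹)ᴴ = R⁻¹ := by rw [Matrix.conjTranspose_nonsing_inv, hRH.eq]
  -- the conjugated matrix
  set Atil := R⁻¹ * A * R⁻¹ with hAtil
  have hAtilPSD : Atil.PosSemidef := by
    have := hA.mul_mul_conjTranspose_same R⁻¹
    rwa [hRiH] at this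
  have hAtilH : Atil.IsHermitian := hAtilPSD.isHermitian
  set U : Matrix (Fin m) (Fin m) ℂ :=
    (Matrix.IsHermitian.eigenvectorUnitary hAtilH : Matrix (Fin m) (Fin m) ℂ) with hU
  set d : Fin m → ℝ := hAtilH.eigenvalues with hd
  have hdnn : ∀ i, 0 ≤ d i := hAtilPSD.eigenvalues_nonneg
  set D : Matrix (Fin m) (Fin m) ℂ := Matrix.diagonal (fun i => (d i : ℂ)) with hD
  have hspec : Atil = U * D * star U := by
    have := hAtilH.spectral_theorem
    rw [Unitary.conjStarAlgAut_apply] at this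
    rw [hU, hD]
    exact this
  have hUU : U * star U = 1 :=
    (Matrix.mem_unitaryGroup_iff).mp (Matrix.IsHermitian.eigenvectorUnitary hAtilH).2
  have hUU' : star U * U = 1 :=
    (Matrix.mem_unitaryGroup_iff').mp (Matrix.IsHermitian.eigenvectorUnitary hAtilH).2
  set T := R⁻¹ * U with hT
  have hTH : Tᴴ = star U * R⁻¹ := by
    rw [hT, Matrix.conjTranspose_mul, hRiH]; rfl
  -- T diagonalizes both forms
  have hTAT : Tᴴ * A * T = D := by
    rw [hTH, hT]
    calc star U * R⁻¹ * A * (R⁻¹ * U) = star U * (R⁻¹ * A * R⁻¹) * U := by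
          noncomm_ring
      _ = star U * (U * D * star U) * U := by rw [← hAtil, hspec]
      _ = (star U * U) * D * (star U * U) := by noncomm_ring
      _ = D := by rw [hUU']; simp
  have hTGT : Tᴴ * G * T = 1 := by
    rw [hTH, hT, ← hRR]
    calc star U * R⁻¹ * (R * R) * (R⁻¹ * U)
        = star U * ((R⁻¹ * R) * (R * R⁻¹)) * U := by noncomm_ring
      _ = star U * U := by rw [hRiR, hRRi]; simp
      _ = 1 := hUU'
  -- products of eigenvalues over p-subsets all equal lam
  have hprod : ∀ s : Finset (Fin m), s.card = p → ∏ i ∈ s, d i = lam := by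
    intro s hs
    set L : Fin p → Fin m := fun i => (s.orderIsoOfFin hs i : Fin m) with hL
    have hLmono : StrictMono L := fun i j hij => by
      exact_mod_cast (s.orderIsoOfFin hs).strictMono hij
    have hLinj := hLmono.injective
    have key := pair_det_all A G (lam : ℂ) (minors_inj A G _ h)
      (fun i => star (Tᵀ (L i))) (fun j => Tᵀ (L j))
    have hAform : pairMat A (fun i => star (Tᵀ (L i))) (fun j => Tᵀ (L j))
        = D.submatrix L L := by
      ext i j
      rw [← hTAT]
      exact pair_cols A T (L i) (L j)
    have hGform : pairMat G (fun i => star (Tᵀ (L i))) (fun j => Tᵀ (L j))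
        = (1 : Matrix (Fin m) (Fin m) ℂ).submatrix L L := by
      ext i j
      rw [← hTGT]
      exact pair_cols G T (L i) (L j)
    rw [hAform, hGform] at key
    have hone : ((1 : Matrix (Fin m) (Fin m) ℂ).submatrix L L)
        = (1 : Matrix (Fin p) (Fin p) ℂ) := by
      ext i j
      simp [Matrix.one_apply, hLinj.eq_iff]
    have hdiag : D.submatrix L L = Matrix.diagonal (fun i => (d (L i) : ℂ)) :=
      Matrix.submatrix_diagonal _ _ hLinj
    rw [hone, hdiag, Matrix.det_one, mul_one, Matrix.det_diagonal] at key
    have : ((∏ i ∈ s, d i : ℝ) : ℂ) = ((lam : ℝ) : ℂ) := by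
      push_cast
      rw [← key]
      rw [← Finset.prod_coe_sort s (fun x => (d x : ℂ))]
      exact (Fintype.prod_equiv (s.orderIsoOfFin hs).toEquiv _ _ (fun i => rfl)).symm
    exact_mod_cast this
  -- all eigenvalues are equal
  have hall : ∀ a b : Fin m, d a = d b := by
    intro a b
    rcases eq_or_ne a b with rfl | hab
    · rfl
    have hsub : p - 1 ≤ (Finset.univ \ {a, b} : Finset (Fin m)).card := by
      have hcard : ({a, b} : Finset (Fin m)).card = 2 := Finset.card_pair hab
      rw [Finset.card_sdiff_of_subset (Finset.subset_univ _), hcard, Finset.card_univ, Fintype.card_fin]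
      omega
    obtain ⟨s, hs_sub, hs_card⟩ := Finset.exists_subset_card_eq hsub
    have ha : a ∉ s := fun hmem => by simpa using hs_sub hmem
    have hb : b ∉ s := fun hmem => by simpa using hs_sub hmem
    have hpa : d a * ∏ i ∈ s, d i = lam := by
      have := hprod (insert a s) (by rw [Finset.card_insert_of_notMem ha, hs_card]; omega)
      rwa [Finset.prod_insert ha] at this
    have hpb : d b * ∏ i ∈ s, d i = lam := by
      have := hprod (insert b s) (by rw [Finset.card_insert_of_notMem hb, hs_card]; omega)
      rwa [Finset.prod_insert hb] at this
    have hne : ∏ i ∈ s, d i ≠ 0 := by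
      intro h0
      rw [h0, mul_zero] at hpa
      exact absurd hpa.symm (ne_of_gt hlam)
    exact mul_right_cancel₀ hne (hpa.trans hpb.symm)
  -- the common value c
  have hm0 : 0 < m := lt_of_le_of_lt (Nat.zero_le p) hpm
  set c : ℝ := d ⟨0, hm0⟩ with hc
  have hdc : ∀ i, d i = c := fun i => hall i ⟨0, hm0⟩
  have hcp : c ^ p = lam := by
    obtain ⟨s, -, hs_card⟩ := Finset.exists_subset_card_eq (s := (Finset.univ : Finset (Fin m))) (n := p)
      (by rw [Finset.card_univ, Fintype.card_fin]; omega)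
    have := hprod s hs_card
    rwa [Finset.prod_congr rfl (fun x _ => hdc x), Finset.prod_const, hs_card] at this
  have hc0 : 0 ≤ c := hdnn _
  have hcrpow : lam ^ (1 / (p : ℝ)) = c := by
    have hp0 : (p : ℝ) ≠ 0 := by positivity
    rw [← hcp, ← Real.rpow_natCast c p, ← Real.rpow_mul hc0]
    rw [mul_one_div, div_self hp0, Real.rpow_one]
  -- conclude
  have hDc : D = (c : ℂ) • (1 : Matrix (Fin m) (Fin m) ℂ) := by
    rw [hD]
    ext i j
    rcases eq_or_ne i j with rfl | hij
    · simp [Matrix.diagonal_apply_eq, Matrix.one_apply_eq, hdc i]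
    · simp [Matrix.diagonal_apply_ne _ hij, Matrix.one_apply_ne hij]
  have hAtilc : Atil = (c : ℂ) • (1 : Matrix (Fin m) (Fin m) ℂ) := by
    rw [hspec, hDc]
    rw [Matrix.mul_smul, Matrix.smul_mul, Matrix.mul_one, hUU]
  have hARR : A = R * Atil * R := by
    rw [hAtil]
    calc A = (R * R⁻¹) * A * (R⁻¹ * R) := by rw [hRRi, hRiR]; simp [Matrix.mul_assoc]
      _ = R * (R⁻¹ * A * R⁻¹) * R := by noncomm_ring
  rw [hARR, hAtilc, hcrpow]
  rw [Matrix.mul_smul, Matrix.smul_mul, Matrix.mul_one, hRR]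

open Matrix in
/-- The pullback metric is `B * gN(F w) * Bᴴ` for `B` the transposed Jacobian matrix. -/
lemma pullbackMetric_eq {m n : ℕ} (gN : (Fin n → ℂ) → Matrix (Fin n) (Fin n) ℂ)
    (F : (Fin m → ℂ) → Fin n → ℂ) (w : Fin m → ℂ) :
    pullbackMetric gN F w
      = (Matrix.of fun l i => Jac F w i l) * gN (F w)
          * ((Matrix.of fun l i => Jac F w i l : Matrix (Fin m) (Fin n) ℂ))ᴴ := by
  ext l k
  simp only [pullbackMetric, Matrix.of_apply, Matrix.mul_apply, Matrix.conjTranspose_apply,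
    Finset.sum_mul, Finset.mul_sum]
  rw [Finset.sum_comm]
  congr 1; funext i; congr 1; funext j
  simp only [RCLike.star_def]
  ring

end Aux

/-!
STATEMENT 3: if a germ of holomorphic map satisfies `F^*ω_N^p = λ ω_M^p` with `1 ≤ p < m`,
then `F^*ω_N = λ^{1/p} ω_M`, i.e. F is a germ of holomorphic isometry from
(M, λ^{1/p} g_M) into (N, g_N).
-/
theorem stmt3 {m n : ℕ} (U : Set (Fin m → ℂ)) (hU : IsOpen U) (x₀ : Fin m → ℂ) (hx₀ : x₀ ∈ U)
    (V : Set (Fin n → ℂ)) (hV : IsOpen V)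
    (gM : HermMetricOn U) (gN : HermMetricOn V)
    (F : (Fin m → ℂ) → Fin n → ℂ) (hF : DifferentiableOn ℂ F U) (hFV : Set.MapsTo F U V)
    (p : ℕ) (hp : 1 ≤ p) (hpm : p < m) (hpn : p ≤ n)
    (lam : ℝ) (hlam : 0 < lam)
    (hpp : PreservesPP gM.g gN.g F U p lam) :
    ∀ w ∈ U, pullbackMetric gN.g F w = ((lam ^ (1 / (p : ℝ)) : ℝ) : ℂ) • gM.g w := by
  intro w hw
  have hGpd : (gM.g w).PosDef := gM.posDef w hw
  have hNpd : (gN.g (F w)).PosDef := gN.posDef (F w) (hFV hw)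
  have hApsd : (pullbackMetric gN.g F w).PosSemidef := by
    rw [pullbackMetric_eq]
    exact hNpd.posSemidef.mul_mul_conjTranspose_same _
  exact core_lemma _ _ hApsd hGpd p hp hpm lam hlam (hpp w hw)
end
end

section
/- Let A, B be m×m positive semidefinite Hermitian matrices with A positive definite, 1 ≤ p < m, and suppose ∧^p B = λ ∧^p A on ∧^p ℂ^m for some real λ > 0 (i.e. all corresponding p×p minors agree up to the factor λ). Then B = λ^{1/p} A. -/
/-!
STATEMENT 5: if `A`, `B` are m×m positive semidefinite Hermitian matrices with `A` positive
definite, `1 ≤ p < m`, and `∧^p B = λ ∧^p A` (all corresponding p×p minors agree up to the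
factor λ > 0), then `B = λ^{1/p} A`.
-/

open scoped Classical ComplexOrder
open Complex

noncomputable section

open Matrix Finset Equiv

namespace Stmt5Aux

variable {R : Type*} [CommRing R] {m p : ℕ}

/-- The index type of p-element subsets of Fin m. -/
abbrev SS (m p : ℕ) := {J : Finset (Fin m) // J.card = p}

/-- The monotone enumeration of a p-subset. -/
def emb (J : SS m p) : Fin p → Fin m := J.1.orderEmbOfFin J.2

lemma emb_strictMono (J : SS m p) : StrictMono (emb J) :=
  (J.1.orderEmbOfFin J.2).strictMono

lemma emb_injective (J : SS m p) : Function.Injective (emb J) :=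
  (emb_strictMono J).injective

lemma emb_mem (J : SS m p) (i : Fin p) : emb J i ∈ J.1 :=
  Finset.orderEmbOfFin_mem _ _ _

lemma range_emb (J : SS m p) : Set.range (emb J) = ↑J.1 :=
  Finset.range_orderEmbOfFin _ _

/-- Step 1 of Cauchy–Binet. -/
lemma det_mul_rect (M : Matrix (Fin p) (Fin m) R) (N : Matrix (Fin m) (Fin p) R) :
    det (M * N) = ∑ f : Fin p → Fin m, (∏ i, M i (f i)) * det (N.submatrix f id) := by
  have hMN : (M * N) = fun i => ∑ k : Fin m, M i k • N k := by
    ext i j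
    simp [Matrix.mul_apply]
  have h1 : det (M * N)
      = (detRowAlternating : (Fin p → R) [⋀^Fin p]→ₗ[R] R).toMultilinearMap
          (fun i => ∑ k : Fin m, M i k • N k) := by
    rw [← hMN]; rfl
  rw [h1,
    (detRowAlternating : (Fin p → R) [⋀^Fin p]→ₗ[R] R).toMultilinearMap.map_sum
      (fun i k => M i k • N k)]
  refine Finset.sum_congr rfl fun f _ => ?_
  have h2 : (detRowAlternating : (Fin p → R) [⋀^Fin p]→ₗ[R] R).toMultilinearMap
        (fun i => M i (f i) • N (f i))
      = (∏ i, M i (f i)) •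
        (detRowAlternating : (Fin p → R) [⋀^Fin p]→ₗ[R] R).toMultilinearMap (fun i => N (f i)) :=
    MultilinearMap.map_smul_univ _ _ _
  rw [h2, smul_eq_mul]
  rfl

/-- The bijection between (subset, permutation) pairs and injective maps. -/
def Phi (x : SS m p × Equiv.Perm (Fin p)) : {f : Fin p → Fin m // Function.Injective f} :=
  ⟨emb x.1 ∘ x.2, (emb_injective x.1).comp x.2.injective⟩

lemma Phi_bijective : Function.Bijective (Phi (m := m) (p := p)) := by
  constructor
  · rintro ⟨J, σ⟩ ⟨J', σ'⟩ hx
    have hfun : emb J ∘ σ = emb J' ∘ σ' := congrArg Subtype.val hx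
    have hJ : J = J' := by
      have h1 : Set.range (emb J ∘ σ) = Set.range (emb J) :=
        Function.Surjective.range_comp σ.surjective (emb J)
      have h2 : Set.range (emb J' ∘ σ') = Set.range (emb J') :=
        Function.Surjective.range_comp σ'.surjective (emb J')
      have : (J.1 : Set (Fin m)) = (J'.1 : Set (Fin m)) := by
        rw [← range_emb, ← range_emb, ← h1, ← h2, hfun]
      exact Subtype.ext (Finset.coe_injective this)
    subst hJ
    have hσ : (σ : Fin p → Fin p) = σ' := by
      funext i
      exact emb_injective J (congrFun hfun i)
    exact Prod.ext rfl (Equiv.ext fun i => congrFun hσ i)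
  · rintro ⟨f, hf⟩
    set J₀ : Finset (Fin m) := Finset.univ.image f with hJ₀def
    have hJ₀ : J₀.card = p := by
      rw [hJ₀def, Finset.card_image_of_injective _ hf, Finset.card_univ, Fintype.card_fin]
    have hmem : ∀ i, f i ∈ J₀ := fun i => Finset.mem_image_of_mem f (Finset.mem_univ i)
    set σfun : Fin p → Fin p := fun i => (J₀.orderIsoOfFin hJ₀).symm ⟨f i, hmem i⟩ with hσfun
    have hσinj : Function.Injective σfun := by
      intro i j hij
      apply hf
      exact congrArg Subtype.val ((J₀.orderIsoOfFin hJ₀).symm.injective hij)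
    obtain ⟨σ, hσ⟩ : ∃ σ : Equiv.Perm (Fin p), (σ : Fin p → Fin p) = σfun :=
      ⟨Equiv.ofBijective σfun (Finite.injective_iff_bijective.mp hσinj), rfl⟩
    refine ⟨⟨⟨J₀, hJ₀⟩, σ⟩, ?_⟩
    apply Subtype.ext
    funext i
    show emb ⟨J₀, hJ₀⟩ (σ i) = f i
    rw [hσ, hσfun]
    show J₀.orderEmbOfFin hJ₀ ((J₀.orderIsoOfFin hJ₀).symm ⟨f i, hmem i⟩) = f i
    rw [← Finset.coe_orderIsoOfFin_apply, OrderIso.apply_symm_apply]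

/-- Cauchy–Binet. -/
lemma cauchyBinet (M : Matrix (Fin p) (Fin m) R) (N : Matrix (Fin m) (Fin p) R) :
    det (M * N) = ∑ J : SS m p,
      det (M.submatrix id (emb J)) * det (N.submatrix (emb J) id) := by
  rw [det_mul_rect]
  have hvanish : ∀ f : Fin p → Fin m, ¬ Function.Injective f →
      (∏ i, M i (f i)) * det (N.submatrix f id) = 0 := by
    intro f hf
    have : det (N.submatrix f id) = 0 := by
      have hrows : ¬ Function.Injective (fun i => N (f i)) := by
        intro hinj
        exact hf fun i j hij => hinj (by simp [hij])
      exact (detRowAlternating : (Fin p → R) [⋀^Fin p]→ₗ[R] R).map_eq_zero_of_not_injective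
        _ hrows
    rw [this, mul_zero]
  -- restrict to injective functions
  have hstep : ∑ f : Fin p → Fin m, (∏ i, M i (f i)) * det (N.submatrix f id)
      = ∑ g : {f : Fin p → Fin m // Function.Injective f},
          (∏ i, M i (g.1 i)) * det (N.submatrix g.1 id) := by
    rw [← Finset.sum_filter_of_ne (p := fun f => Function.Injective f)
      (by intro f _ hne; by_contra hni; exact hne (hvanish f hni))]
    exact Finset.sum_subtype _ (by intro x; simp) _
  rw [hstep, ← Fintype.sum_bijective _ Phi_bijective _ _ (fun x => rfl)]
  rw [Fintype.sum_prod_type]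
  refine Finset.sum_congr rfl fun J _ => ?_
  -- inner sum over permutations
  have hperm : ∀ σ : Equiv.Perm (Fin p),
      det (N.submatrix (emb J ∘ σ) id)
        = (Equiv.Perm.sign σ : ℤ) * det (N.submatrix (emb J) id) := by
    intro σ
    have heq : N.submatrix (emb J ∘ σ) id = (N.submatrix (emb J) id).submatrix σ id := by
      ext i j; simp [Matrix.submatrix_apply]
    rw [heq]
    exact Matrix.det_permute σ _
  have hdetM : det (M.submatrix id (emb J))
      = ∑ σ : Equiv.Perm (Fin p), (Equiv.Perm.sign σ : ℤ) * ∏ i, M i (emb J (σ i)) := by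
    rw [← Matrix.det_transpose, Matrix.det_apply']
    refine Finset.sum_congr rfl fun σ _ => ?_
    simp [Matrix.submatrix_apply]
  rw [hdetM, Finset.sum_mul]
  refine Finset.sum_congr rfl fun σ _ => ?_
  show (∏ i, M i ((emb J ∘ σ) i)) * det (N.submatrix (emb J ∘ σ) id) = _
  rw [hperm σ]
  simp only [Function.comp_apply]
  ring

/-- Compound matrix. -/
def cmp (p : ℕ) (X : Matrix (Fin m) (Fin m) R) : Matrix (SS m p) (SS m p) R :=
  fun J K => det (X.submatrix (emb J) (emb K))

lemma cmp_mul (X Y : Matrix (Fin m) (Fin m) R) :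
    cmp p (X * Y) = cmp p X * cmp p Y := by
  ext J K
  rw [Matrix.mul_apply]
  have hsub : (X * Y).submatrix (emb J) (emb K)
      = (X.submatrix (emb J) id) * (Y.submatrix id (emb K)) :=
    Matrix.submatrix_mul X Y (emb J) id (emb K) Function.bijective_id
  show det ((X * Y).submatrix (emb J) (emb K)) = _
  rw [hsub, cauchyBinet]
  refine Finset.sum_congr rfl fun J' _ => ?_
  simp [cmp, Matrix.submatrix_submatrix]

lemma cmp_diagonal (d : Fin m → R) :
    cmp p (Matrix.diagonal d)
      = Matrix.diagonal (fun J : SS m p => ∏ a ∈ J.1, d a) := by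
  ext J K
  by_cases hJK : J = K
  · subst hJK
    have hsub : (Matrix.diagonal d).submatrix (emb J) (emb J)
        = Matrix.diagonal (fun i => d (emb J i)) := by
      ext i j
      by_cases hij : i = j
      · subst hij; simp [Matrix.submatrix_apply, Matrix.diagonal_apply_eq]
      · rw [Matrix.submatrix_apply, Matrix.diagonal_apply_ne _ (fun hc => hij (emb_injective J hc)),
          Matrix.diagonal_apply_ne _ hij]
    show det ((Matrix.diagonal d).submatrix (emb J) (emb J)) = _
    rw [hsub, Matrix.det_diagonal, Matrix.diagonal_apply_eq]
    have himg : J.1 = Finset.univ.image (emb J) := by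
      apply Finset.coe_injective
      rw [Finset.coe_image, Finset.coe_univ, Set.image_univ, range_emb]
    rw [himg, Finset.prod_image (fun i _ j _ hij => emb_injective J hij)]
  · show det ((Matrix.diagonal d).submatrix (emb J) (emb K)) = _
    rw [Matrix.diagonal_apply_ne _ hJK]
    -- J.1 ≠ K.1; find an element in one not the other
    have hne : J.1 ≠ K.1 := fun hc => hJK (Subtype.ext hc)
    have hcases : (∃ a ∈ J.1, a ∉ K.1) ∨ (∃ a ∈ K.1, a ∉ J.1) := by
      by_contra hcon
      push_neg at hcon
      obtain ⟨h1, h2⟩ := hcon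
      exact hne (Finset.Subset.antisymm h1 h2)
    rcases hcases with ⟨a, haJ, haK⟩ | ⟨a, haK, haJ⟩
    · obtain ⟨i, hi⟩ : ∃ i, emb J i = a := by
        have : a ∈ Set.range (emb J) := by rw [range_emb]; exact_mod_cast haJ
        exact this
      apply Matrix.det_eq_zero_of_row_eq_zero i
      intro j
      rw [Matrix.submatrix_apply, Matrix.diagonal_apply_ne]
      intro hc
      exact haK (by rw [← hi, hc]; exact emb_mem K j)
    · obtain ⟨j, hj⟩ : ∃ j, emb K j = a := by
        have : a ∈ Set.range (emb K) := by rw [range_emb]; exact_mod_cast haK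
        exact this
      apply Matrix.det_eq_zero_of_column_eq_zero j
      intro i
      rw [Matrix.submatrix_apply, Matrix.diagonal_apply_ne]
      intro hc
      exact haJ (by rw [← hj, ← hc]; exact emb_mem J i)

lemma cmp_one : cmp p (1 : Matrix (Fin m) (Fin m) R) = 1 := by
  rw [← Matrix.diagonal_one, cmp_diagonal]
  simp

end Stmt5Aux

open Stmt5Aux
open scoped MatrixOrder

theorem stmt5 {m p : ℕ} (hp : 1 ≤ p) (hpm : p < m)
    (A B : Matrix (Fin m) (Fin m) ℂ) (hA : A.PosDef) (hB : B.PosSemidef)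
    (lam : ℝ) (hlam : 0 < lam)
    (h : ∀ L K : Fin p → Fin m, StrictMono L → StrictMono K →
      (B.submatrix L K).det = (lam : ℂ) * (A.submatrix L K).det) :
    B = ((lam ^ (1 / (p : ℝ)) : ℝ) : ℂ) • A := by
  have hAsd := hA.posSemidef
  set W := CFC.sqrt A with hWdef
  have hWW : W * W = A := CFC.sqrt_mul_sqrt_self A hAsd.nonneg
  have hWh : W.IsHermitian := (Matrix.nonneg_iff_posSemidef.mp (CFC.sqrt_nonneg A)).1
  have hdetW : IsUnit W.det := by
    have : W.det * W.det = A.det := by rw [← Matrix.det_mul, hWW]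
    have hAdet : A.det ≠ 0 := hA.det_pos.ne'
    exact isUnit_iff_ne_zero.mpr (fun hc => hAdet (by rw [← this, hc, zero_mul]))
  set Q := W⁻¹ with hQdef
  have hQW : Q * W = 1 := Matrix.nonsing_inv_mul W hdetW
  have hWQ : W * Q = 1 := Matrix.mul_nonsing_inv W hdetW
  have hQh : Qᴴ = Q := by
    rw [hQdef, Matrix.conjTranspose_nonsing_inv, hWh.eq]
  set S := Q * B * Q with hSdef
  have hSpsd : S.PosSemidef := by
    have := hB.conjTranspose_mul_mul_same Q
    rwa [hQh] at this
  have hSh := hSpsd.1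
  -- compound equality
  have hcmpBA : cmp p B = (lam : ℂ) • cmp p A := by
    ext J K
    show det (B.submatrix (emb J) (emb K)) = _
    rw [h (emb J) (emb K) (emb_strictMono J) (emb_strictMono K)]
    rfl
  have hQAQ : Q * A * Q = 1 := by
    rw [← hWW, show Q * (W * W) * Q = (Q * W) * (W * Q) by noncomm_ring, hQW, hWQ, one_mul]
  have hcmpS : cmp p S = (lam : ℂ) • 1 := by
    rw [hSdef, cmp_mul, cmp_mul, hcmpBA, Matrix.mul_smul, Matrix.smul_mul, ← cmp_mul, ← cmp_mul,
      hQAQ, cmp_one]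
  -- spectral theorem
  set U : Matrix (Fin m) (Fin m) ℂ := (hSh.eigenvectorUnitary : Matrix (Fin m) (Fin m) ℂ)
    with hUdef
  set μ := hSh.eigenvalues with hμdef
  have hUU : U * star U = 1 := Matrix.mem_unitaryGroup_iff.mp hSh.eigenvectorUnitary.2
  have hUU' : star U * U = 1 := Matrix.mem_unitaryGroup_iff'.mp hSh.eigenvectorUnitary.2
  have hdiag : star U * S * U = Matrix.diagonal (RCLike.ofReal ∘ μ) :=
    by have := hSh.conjStarAlgAut_star_eigenvectorUnitary; rwa [Unitary.conjStarAlgAut_star_apply] at this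
  have hcmpD : cmp p (Matrix.diagonal (RCLike.ofReal ∘ μ) : Matrix (Fin m) (Fin m) ℂ)
      = (lam : ℂ) • 1 := by
    rw [← hdiag, cmp_mul, cmp_mul, hcmpS, Matrix.mul_smul, Matrix.smul_mul, mul_one, ← cmp_mul,
      hUU', cmp_one]
  have hprod : ∀ J : SS m p, ∏ a ∈ J.1, μ a = lam := by
    intro J
    have hD2 := hcmpD
    rw [cmp_diagonal] at hD2
    have := (Matrix.ext_iff.2 hD2) J J
    rw [Matrix.diagonal_apply_eq] at this
    simp only [Function.comp_apply, Matrix.smul_apply, Matrix.one_apply_eq, smul_eq_mul,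
      mul_one] at this
    rw [show (RCLike.ofReal : ℝ → ℂ) = Complex.ofReal from rfl] at this
    have h2 : ((∏ a ∈ J.1, μ a : ℝ) : ℂ) = ((lam : ℝ) : ℂ) := by
      rw [Complex.ofReal_prod]
      exact this
    exact Complex.ofReal_injective h2
  -- all eigenvalues are equal
  have hm2 : 2 ≤ m := lt_of_le_of_lt hp hpm
  have hμeq : ∀ a b : Fin m, μ a = μ b := by
    intro a b
    by_cases hab : a = b
    · rw [hab]
    -- pick a (p-1)-subset avoiding a and b
    have hcard : p - 1 ≤ (Finset.univ \ {a, b} : Finset (Fin m)).card := by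
      rw [Finset.card_sdiff_of_subset (Finset.subset_univ _), Finset.card_univ, Fintype.card_fin,
        Finset.card_insert_of_notMem (by simp [hab]), Finset.card_singleton]
      omega
    obtain ⟨T, hTsub, hTcard⟩ := Finset.exists_subset_card_eq hcard
    have haT : a ∉ T := fun hc => by simpa using hTsub hc
    have hbT : b ∉ T := fun hc => by simpa using hTsub hc
    have hTa : (insert a T).card = p := by
      rw [Finset.card_insert_of_notMem haT, hTcard]; omega
    have hTb : (insert b T).card = p := by
      rw [Finset.card_insert_of_notMem hbT, hTcard]; omega
    have hpa := hprod ⟨insert a T, hTa⟩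
    have hpb := hprod ⟨insert b T, hTb⟩
    rw [Finset.prod_insert haT] at hpa
    rw [Finset.prod_insert hbT] at hpb
    have hT0 : ∏ x ∈ T, μ x ≠ 0 := by
      intro hc
      rw [hc, mul_zero] at hpa
      exact hlam.ne' hpa.symm
    exact mul_right_cancel₀ hT0 (by rw [hpa, hpb])
  set c := μ ⟨0, by omega⟩ with hcdef
  have hcpow : c ^ p = lam := by
    obtain ⟨T, _, hTcard⟩ := Finset.exists_subset_card_eq
      (show p ≤ (Finset.univ : Finset (Fin m)).card by
        rw [Finset.card_univ, Fintype.card_fin]; omega)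
    have := hprod ⟨T, hTcard⟩
    rw [show ∏ a ∈ T, μ a = ∏ _a ∈ T, c from Finset.prod_congr rfl fun a _ => hμeq a _,
      Finset.prod_const, hTcard] at this
    exact this
  have hc0 : 0 ≤ c := hSpsd.eigenvalues_nonneg _
  have hclam : c = lam ^ (1 / (p : ℝ)) := by
    rw [← hcpow, ← Real.rpow_natCast c p, ← Real.rpow_mul hc0, one_div,
      mul_inv_cancel₀ (by exact_mod_cast (by omega : p ≠ 0)), Real.rpow_one]
  -- reconstruct S
  have hDc : (Matrix.diagonal (RCLike.ofReal ∘ μ) : Matrix (Fin m) (Fin m) ℂ) = (c : ℂ) • 1 := by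
    have : (RCLike.ofReal ∘ μ : Fin m → ℂ) = fun _ => (c : ℂ) := by
      funext a
      simp [Function.comp, hμeq a ⟨0, by omega⟩, hcdef]
    rw [this]
    ext i j
    by_cases hij : i = j
    · subst hij; simp
    · simp [Matrix.diagonal_apply_ne _ hij, Matrix.one_apply_ne hij]
  have hSc : S = (c : ℂ) • 1 := by
    have hspec := hSh.spectral_theorem
    rw [hspec, Unitary.conjStarAlgAut_apply, ← hUdef, ← hμdef, hDc, Matrix.mul_smul, Matrix.smul_mul, mul_one, hUU]
  have hBc : B = (c : ℂ) • A := by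
    have hB' : B = W * S * W := by
      rw [hSdef, show W * (Q * B * Q) * W = (W * Q) * B * (Q * W) by noncomm_ring, hWQ, hQW,
        one_mul, mul_one]
    rw [hB', hSc, Matrix.mul_smul, Matrix.smul_mul, mul_one, hWW]
  rw [hBc, hclam]
end
end

section
/- Let U ⊆ ℂ be a connected open set containing 0, and let k ≥ 1 be an integer. The real-analytic function ψ(ζ) = 1/(1 − |ζ|²)^k on U ∩ 𝔻 does not belong to the Umehara algebra Λ(U ∩ 𝔻), i.e. it cannot be written as a finite real linear combination of functions of the form f(ζ)·conj(g(ζ)) + g(ζ)·conj(f(ζ)) with f, g holomorphic on U ∩ 𝔻. -/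
open Complex Topology Filter

noncomputable section

/-- Membership in the Umehara algebra Λ(S): the (real-valued, viewed in ℂ) function φ is a finite
real linear combination of functions `f·conj(g) + g·conj(f)` with `f`, `g` holomorphic on `S`. -/
def UmeharaMem {E : Type*} [NormedAddCommGroup E] [NormedSpace ℂ E]
    (S : Set E) (φ : E → ℂ) : Prop :=
  ∃ (r : ℕ) (c : Fin r → ℝ) (f g : Fin r → E → ℂ),
    (∀ j, DifferentiableOn ℂ (f j) S) ∧ (∀ j, DifferentiableOn ℂ (g j) S) ∧
    ∀ z ∈ S, φ z = ∑ j, (c j : ℂ) *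
      (f j z * (starRingEnd ℂ) (g j z) + g j z * (starRingEnd ℂ) (f j z))

lemma hasDerivAt_conj_conj {g : ℂ → ℂ} {d z : ℂ} (h : HasDerivAt g d ((starRingEnd ℂ) z)) :
    HasDerivAt (fun w => (starRingEnd ℂ) (g ((starRingEnd ℂ) w))) ((starRingEnd ℂ) d) z := by
  rw [hasDerivAt_iff_tendsto_slope] at h ⊢
  have hconj : Filter.Tendsto (starRingEnd ℂ) (𝓝[≠] z) (𝓝[≠] ((starRingEnd ℂ) z)) := by
    apply Filter.Tendsto.inf
    · exact (Complex.continuous_conj.tendsto z)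
    · apply Filter.tendsto_principal_principal.mpr
      intro x hx hx2
      exact hx (by simpa using congrArg (starRingEnd ℂ) hx2)
  have key : ∀ x : ℂ, x ≠ z → slope (fun w => (starRingEnd ℂ) (g ((starRingEnd ℂ) w))) z x
      = (starRingEnd ℂ) (slope g ((starRingEnd ℂ) z) ((starRingEnd ℂ) x)) := by
    intro x hx
    simp only [slope_def_field, div_eq_mul_inv, map_mul, map_sub, map_inv₀, Complex.conj_conj]
  have := (Complex.continuous_conj.tendsto d).comp (h.comp hconj)
  apply this.congr'
  filter_upwards [self_mem_nhdsWithin] with x hx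
  exact (key x hx).symm

/-- A sequence of nonzero points tending to a point gives `frequently` in `𝓝[≠]`. -/
lemma frequently_of_seq {p : ℂ → Prop} {z₀ : ℂ} (x : ℕ → ℂ)
    (hx : Filter.Tendsto x atTop (𝓝 z₀)) (hne : ∀ n, x n ≠ z₀) (hp : ∀ n, p (x n)) :
    ∃ᶠ z in 𝓝[≠] z₀, p z := by
  have hx' : Filter.Tendsto x atTop (𝓝[≠] z₀) := by
    exact tendsto_nhdsWithin_iff.mpr ⟨hx, Filter.Eventually.of_forall hne⟩
  exact hx'.frequently ((Filter.eventually_atTop.mpr ⟨0, fun n _ => hp n⟩).frequently)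

set_option maxHeartbeats 1000000 in
theorem stmt6 (U : Set ℂ) (hU : IsOpen U) (hconn : IsConnected U) (h0 : (0 : ℂ) ∈ U)
    (k : ℕ) (hk : 1 ≤ k) :
    ¬ UmeharaMem (U ∩ Metric.ball (0 : ℂ) 1)
        (fun ζ => ((((1 - ‖ζ‖ ^ 2) ^ k)⁻¹ : ℝ) : ℂ)) := by
  rintro ⟨r, c, f, g, hf, hg, hsum⟩
  set S : Set ℂ := U ∩ Metric.ball (0 : ℂ) 1 with hS
  have hSopen : IsOpen S := hU.inter Metric.isOpen_ball
  have h0S : (0 : ℂ) ∈ S := ⟨h0, by simp⟩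
  obtain ⟨ε₀, hε₀, hball₀⟩ := Metric.isOpen_iff.1 hSopen 0 h0S
  set ε : ℝ := min ε₀ 1 with hεdef
  have hε : 0 < ε := lt_min hε₀ one_pos
  have hε1 : ε ≤ 1 := min_le_right _ _
  have hball : Metric.ball (0 : ℂ) ε ⊆ S := fun z hz =>
    hball₀ (Metric.ball_subset_ball (min_le_left _ _) hz)
  -- membership in the ball via |z|
  have hmem : ∀ z : ℂ, ‖z‖ < ε → z ∈ Metric.ball (0 : ℂ) ε := by
    intro z hz; simpa [Metric.mem_ball, Complex.dist_eq] using hz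
  have habs : ∀ z : ℂ, z ∈ Metric.ball (0 : ℂ) ε → ‖z‖ < ε := by
    intro z hz; simpa [Metric.mem_ball, Complex.dist_eq] using hz
  -- differentiability at points of the small ball
  have hfA : ∀ j, ∀ z ∈ Metric.ball (0 : ℂ) ε, DifferentiableAt ℂ (f j) z := fun j z hz =>
    (hf j).differentiableAt (hSopen.mem_nhds (hball hz))
  have hgA : ∀ j, ∀ z ∈ Metric.ball (0 : ℂ) ε, DifferentiableAt ℂ (g j) z := fun j z hz =>
    (hg j).differentiableAt (hSopen.mem_nhds (hball hz))
  -- the reflected functions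
  set F : Fin r → ℂ → ℂ := fun j w => (starRingEnd ℂ) (f j ((starRingEnd ℂ) w)) with hFdef
  set G : Fin r → ℂ → ℂ := fun j w => (starRingEnd ℂ) (g j ((starRingEnd ℂ) w)) with hGdef
  have hconjmem : ∀ z : ℂ, z ∈ Metric.ball (0 : ℂ) ε → (starRingEnd ℂ) z ∈ Metric.ball (0 : ℂ) ε := by
    intro z hz; apply hmem; rw [Complex.norm_conj]; exact habs z hz
  have hFA : ∀ j, ∀ z ∈ Metric.ball (0 : ℂ) ε, DifferentiableAt ℂ (F j) z := by
    intro j z hz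
    exact (hasDerivAt_conj_conj ((hfA j _ (hconjmem z hz)).hasDerivAt)).differentiableAt
  have hGA : ∀ j, ∀ z ∈ Metric.ball (0 : ℂ) ε, DifferentiableAt ℂ (G j) z := by
    intro j z hz
    exact (hasDerivAt_conj_conj ((hgA j _ (hconjmem z hz)).hasDerivAt)).differentiableAt
  -- the polarized sum
  set Φ : ℂ → ℂ → ℂ := fun u w => ∑ j, (c j : ℂ) * (f j u * G j w + g j u * F j w) with hΦdef
  -- the basic identity on the diagonal
  have hdiag : ∀ z ∈ Metric.ball (0 : ℂ) ε, Φ z ((starRingEnd ℂ) z)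
      = ((1 - z * (starRingEnd ℂ) z) ^ k)⁻¹ := by
    intro z hz
    have h1 := hsum z (hball hz)
    simp only at h1
    have h2 : Φ z ((starRingEnd ℂ) z) = ∑ j, (c j : ℂ) *
        (f j z * (starRingEnd ℂ) (g j z) + g j z * (starRingEnd ℂ) (f j z)) := by
      simp only [hΦdef, hGdef, hFdef, Complex.conj_conj]
    rw [h2, ← h1]
    rw [Complex.ofReal_inv, Complex.ofReal_pow]
    congr 2
    rw [Complex.mul_conj, ← Complex.sq_norm]
    push_cast
    ring
  -- nonvanishing of 1 - u*w on the small ball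
  have hne1 : ∀ u w : ℂ, ‖u‖ < ε → ‖w‖ < ε → 1 - u * w ≠ 0 := by
    intro u w hu hw h
    have : ‖u * w‖ < 1 := by
      rw [norm_mul]
      calc ‖u‖ * ‖w‖ < ε * ε :=
        mul_lt_mul'' hu hw (norm_nonneg u) (norm_nonneg w)
      _ ≤ 1 * 1 := mul_le_mul hε1 hε1 hε.le zero_le_one
      _ = 1 := one_mul 1
    rw [sub_eq_zero] at h
    rw [← h] at this
    simp at this
  -- Step A : polarization along complex rotations
  have stepA : ∀ t : ℝ, 0 < t → t < ε → ∀ θ : ℂ, |θ.im| < Real.log (ε / t) →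
      Φ ((t : ℂ) * Complex.exp (Complex.I * θ)) ((t : ℂ) * Complex.exp (-(Complex.I * θ)))
        = ((1 - (t : ℂ) ^ 2) ^ k)⁻¹ := by
    intro t ht htε θ hθ
    set V : Set ℂ := {x : ℂ | |x.im| < Real.log (ε / t)} with hVdef
    have hlog : 0 < Real.log (ε / t) := Real.log_pos ((one_lt_div ht).mpr htε)
    have hVopen : IsOpen V := by
      have : V = Complex.im ⁻¹' Set.Ioo (-Real.log (ε / t)) (Real.log (ε / t)) := by
        ext x; simp [hVdef, abs_lt]
      rw [this]
      exact Complex.continuous_im.isOpen_preimage _ isOpen_Ioo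
    have hVconv : Convex ℝ V := by
      have : V = Complex.imLm ⁻¹' Set.Ioo (-Real.log (ε / t)) (Real.log (ε / t)) := by
        ext x; simp [hVdef, abs_lt, Complex.imLm]
      rw [this]
      exact (convex_Ioo _ _).linear_preimage _
    have h0V : (0 : ℂ) ∈ V := by simp [hVdef, hlog]
    -- the two rotation maps send V into the small ball
    have hmap1 : ∀ x ∈ V, ‖(t : ℂ) * Complex.exp (Complex.I * x)‖ < ε := by
      intro x hx
      rw [norm_mul, Complex.norm_exp, Complex.norm_real, Real.norm_eq_abs, abs_of_pos ht]
      have hre : (Complex.I * x).re = -x.im := by simp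
      rw [hre]
      have : -x.im < Real.log (ε / t) := lt_of_le_of_lt (neg_le_abs _) hx
      calc t * Real.exp (-x.im) < t * Real.exp (Real.log (ε / t)) := by
            apply mul_lt_mul_of_pos_left (Real.exp_lt_exp.mpr this) ht
        _ = ε := by rw [Real.exp_log (div_pos hε ht)]; field_simp
    have hmap2 : ∀ x ∈ V, ‖(t : ℂ) * Complex.exp (-(Complex.I * x))‖ < ε := by
      intro x hx
      rw [norm_mul, Complex.norm_exp, Complex.norm_real, Real.norm_eq_abs, abs_of_pos ht]
      have hre : (-(Complex.I * x)).re = x.im := by simp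
      rw [hre]
      have : x.im < Real.log (ε / t) := lt_of_le_of_lt (le_abs_self _) hx
      calc t * Real.exp x.im < t * Real.exp (Real.log (ε / t)) := by
            apply mul_lt_mul_of_pos_left (Real.exp_lt_exp.mpr this) ht
        _ = ε := by rw [Real.exp_log (div_pos hε ht)]; field_simp
    set M : ℂ → ℂ := fun x => Φ ((t : ℂ) * Complex.exp (Complex.I * x))
        ((t : ℂ) * Complex.exp (-(Complex.I * x))) - ((1 - (t : ℂ) ^ 2) ^ k)⁻¹ with hMdef
    have hin1 : Differentiable ℂ (fun x : ℂ => (t : ℂ) * Complex.exp (Complex.I * x)) :=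
      (Complex.differentiable_exp.comp (differentiable_id.const_mul Complex.I)).const_mul _
    have hin2 : Differentiable ℂ (fun x : ℂ => (t : ℂ) * Complex.exp (-(Complex.I * x))) :=
      (Complex.differentiable_exp.comp ((differentiable_id.const_mul Complex.I).neg)).const_mul _
    have hMdiff : DifferentiableOn ℂ M V := by
      intro x hx
      apply DifferentiableAt.differentiableWithinAt
      apply DifferentiableAt.sub_const
      apply DifferentiableAt.fun_sum
      intro j _
      apply DifferentiableAt.const_mul
      apply DifferentiableAt.add
      · exact ((hfA j _ (hmem _ (hmap1 x hx))).comp x (hin1 x)).mul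
          ((hGA j _ (hmem _ (hmap2 x hx))).comp (g := G j) (f := fun x : ℂ => (t : ℂ) * Complex.exp (-(Complex.I * x))) x (hin2 x))
      · exact ((hgA j _ (hmem _ (hmap1 x hx))).comp x (hin1 x)).mul
          ((hFA j _ (hmem _ (hmap2 x hx))).comp (g := F j) (f := fun x : ℂ => (t : ℂ) * Complex.exp (-(Complex.I * x))) x (hin2 x))
    have hMreal : ∀ s : ℝ, M (s : ℂ) = 0 := by
      intro s
      have hzmem : ((t : ℂ) * Complex.exp (Complex.I * (s : ℂ))) ∈ Metric.ball (0 : ℂ) ε := by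
        apply hmem
        rw [norm_mul, Complex.norm_exp, Complex.norm_real, Real.norm_eq_abs, abs_of_pos ht]
        have : (Complex.I * (s : ℂ)).re = 0 := by simp
        rw [this, Real.exp_zero, mul_one]
        exact htε
      have hconjz : (starRingEnd ℂ) ((t : ℂ) * Complex.exp (Complex.I * (s : ℂ)))
          = (t : ℂ) * Complex.exp (-(Complex.I * (s : ℂ))) := by
        rw [map_mul, Complex.conj_ofReal, ← Complex.exp_conj]
        congr 2
        simp [Complex.conj_ofReal]
      have hd := hdiag _ hzmem
      rw [hconjz] at hd
      have hzz : ((t : ℂ) * Complex.exp (Complex.I * (s : ℂ))) *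
          ((t : ℂ) * Complex.exp (-(Complex.I * (s : ℂ)))) = (t : ℂ) ^ 2 := by
        rw [mul_mul_mul_comm, ← Complex.exp_add]
        simp [sq]
      rw [hzz] at hd
      simp only [hMdef]
      rw [hd, sub_self]
    have hfreq : ∃ᶠ x in 𝓝[≠] (0 : ℂ), M x = 0 := by
      apply frequently_of_seq (fun n : ℕ => ((1 / (n + 1 : ℝ) : ℝ) : ℂ))
      · have h1 : Filter.Tendsto (fun n : ℕ => (1 / (n + 1 : ℝ) : ℝ)) atTop (𝓝 0) :=
          tendsto_one_div_add_atTop_nhds_zero_nat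
        have := (Complex.continuous_ofReal.tendsto 0).comp h1
        simpa [Function.comp_def] using this
      · intro n
        simp only [ne_eq, Complex.ofReal_eq_zero]
        positivity
      · intro n; exact hMreal _
    have heq := (hMdiff.analyticOnNhd hVopen).eqOn_zero_of_preconnected_of_frequently_eq_zero
      hVconv.isPreconnected h0V hfreq
    have := heq hθ
    simpa [hMdef, sub_eq_zero] using this
  -- Step C : full polarization
  have stepC : ∀ u : ℂ, u ≠ 0 → ‖u‖ < ε → ∀ w ∈ Metric.ball (0 : ℂ) ε,
      Φ u w = ((1 - u * w) ^ k)⁻¹ := by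
    intro u hu0 huε w hw
    set A : ℝ := ‖u‖ with hAdef
    have hA0 : 0 < A := norm_pos_iff.mpr hu0
    set K : ℂ → ℂ := fun x => Φ u x - ((1 - u * x) ^ k)⁻¹ with hKdef
    have hKdiff : DifferentiableOn ℂ K (Metric.ball (0 : ℂ) ε) := by
      intro x hx
      apply DifferentiableAt.differentiableWithinAt
      apply DifferentiableAt.sub
      · apply DifferentiableAt.fun_sum
        intro j _
        exact (((differentiableAt_const _).mul (hGA j x hx)).add
          ((differentiableAt_const _).mul (hFA j x hx))).const_mul _
      · apply DifferentiableAt.inv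
        · exact ((differentiableAt_const _).sub ((differentiableAt_id.const_mul u))).pow k
        · exact pow_ne_zero k (hne1 u x huε (habs x hx))
    -- the sequence of zeros
    set t0 : ℝ := Real.sqrt (ε * A) / 2 with ht0def
    have ht0 : 0 < t0 := by positivity
    have ht0sq : t0 ^ 2 < ε * A := by
      rw [ht0def, div_pow, Real.sq_sqrt (by positivity)]
      nlinarith
    have hKzero : ∀ n : ℕ, K (((t0 / (n + 1) : ℝ) : ℂ) ^ 2 / u) = 0 := by
      intro n
      set t : ℝ := t0 / (n + 1) with htdef
      have ht : 0 < t := by positivity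
      have htle : t ≤ t0 := by
        rw [htdef, div_le_iff₀ (by positivity)]
        nlinarith
      have htsq : t ^ 2 < ε * A := lt_of_le_of_lt (by nlinarith) ht0sq
      have htA : t ^ 2 < ε * ε := lt_of_lt_of_le htsq (by nlinarith)
      have htε : t < ε := by nlinarith
      have htc0 : ((t : ℝ) : ℂ) ≠ 0 := Complex.ofReal_ne_zero.mpr (ne_of_gt ht)
      set θ : ℂ := -Complex.I * Complex.log (u / (t : ℂ)) with hθdef
      have hdiv0 : u / ((t : ℝ) : ℂ) ≠ 0 := div_ne_zero hu0 htc0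
      have e0 : Complex.I * θ = Complex.log (u / (t : ℂ)) := by
        rw [hθdef]; ring_nf; rw [Complex.I_sq]; ring
      have e1 : ((t : ℝ) : ℂ) * Complex.exp (Complex.I * θ) = u := by
        rw [e0, Complex.exp_log hdiv0, mul_div_cancel₀ _ htc0]
      have e2 : ((t : ℝ) : ℂ) * Complex.exp (-(Complex.I * θ)) = ((t : ℝ) : ℂ) ^ 2 / u := by
        rw [e0, Complex.exp_neg, Complex.exp_log hdiv0]
        field_simp
      have hstrip : |θ.im| < Real.log (ε / t) := by
        have him : θ.im = -Real.log (A / t) := by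
          rw [hθdef]
          have : (-Complex.I * Complex.log (u / (t : ℂ))).im
              = -(Complex.log (u / (t : ℂ))).re := by simp
          rw [this, Complex.log_re]
          congr 2
          rw [norm_div, Complex.norm_real, Real.norm_eq_abs, abs_of_pos ht]
        rw [him, abs_neg, abs_lt]
        constructor
        · rw [neg_lt, ← Real.log_inv]
          apply Real.log_lt_log (by positivity)
          rw [inv_div, div_lt_div_iff₀ hA0 ht]
          nlinarith
        · apply Real.log_lt_log (by positivity)
          gcongr
      have hsA := stepA t ht htε θ hstrip
      rw [e1, e2] at hsA
      have huu : u * (((t : ℝ) : ℂ) ^ 2 / u) = ((t : ℝ) : ℂ) ^ 2 := by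
        field_simp
      rw [hKdef]
      simp only
      rw [huu, hsA, sub_self]
    have hfreq : ∃ᶠ x in 𝓝[≠] (0 : ℂ), K x = 0 := by
      apply frequently_of_seq (fun n : ℕ => ((t0 / (n + 1 : ℝ) : ℝ) : ℂ) ^ 2 / u)
      · have h1 : Filter.Tendsto (fun n : ℕ => (t0 / (n + 1 : ℝ) : ℝ)) atTop (𝓝 0) := by
          have := tendsto_one_div_add_atTop_nhds_zero_nat.const_mul t0
          simpa [div_eq_mul_inv, one_div] using this
        have h2 : Filter.Tendsto (fun n : ℕ => ((t0 / (n + 1 : ℝ) : ℝ) : ℂ)) atTop (𝓝 0) := by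
          have := (Complex.continuous_ofReal.tendsto 0).comp h1
          simpa [Function.comp_def] using this
        have h3 : Filter.Tendsto (fun x : ℂ => x ^ 2 / u) (𝓝 0) (𝓝 0) := by
          have : Filter.Tendsto (fun x : ℂ => x ^ 2 / u) (𝓝 0) (𝓝 ((0 : ℂ) ^ 2 / u)) :=
            ((continuous_pow 2).div_const u).tendsto 0
          simpa using this
        exact h3.comp h2
      · intro n
        apply div_ne_zero _ hu0
        apply pow_ne_zero
        rw [Complex.ofReal_ne_zero]
        positivity
      · exact hKzero
    have heq := (hKdiff.analyticOnNhd Metric.isOpen_ball).eqOn_zero_of_preconnected_of_frequently_eq_zero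
      (convex_ball (0 : ℂ) ε).isPreconnected (hmem 0 (by simpa using hε)) hfreq
    have := heq hw
    simpa [hKdef, sub_eq_zero] using this
  -- Final step : finite rank contradiction
  classical
  set N : ℕ := 2 * r + 1 with hNdef
  have hN1 : (1 : ℝ) ≤ (N : ℝ) := by exact_mod_cast (by omega : 1 ≤ N)
  have hN0 : (0 : ℝ) < 2 * (N : ℝ) := by linarith
  set uu : Fin N → ℝ := fun i => ε * ((i : ℕ) + 1) / (2 * (N : ℝ)) with huudef
  have hupos : ∀ i, 0 < uu i := by
    intro i
    apply div_pos _ hN0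
    have : (0 : ℝ) < ((i : ℕ) : ℝ) + 1 := by positivity
    exact mul_pos hε this
  have hult : ∀ i, uu i < ε := by
    intro i
    have hi : ((i : ℕ) : ℝ) + 1 ≤ (N : ℝ) := by exact_mod_cast i.isLt
    show ε * ((i : ℕ) + 1) / (2 * (N : ℝ)) < ε
    rw [div_lt_iff₀ hN0]
    calc ε * (((i : ℕ) : ℝ) + 1) ≤ ε * (N : ℝ) := mul_le_mul_of_nonneg_left hi hε.le
      _ < ε * (2 * (N : ℝ)) := mul_lt_mul_of_pos_left (by linarith) hε
  have huinj : Function.Injective uu := by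
    intro i j h
    rw [huudef] at h
    simp only at h
    rw [div_eq_div_iff (ne_of_gt hN0) (ne_of_gt hN0)] at h
    have h2 : ((i : ℕ) : ℝ) = ((j : ℕ) : ℝ) := by
      have := mul_right_cancel₀ (ne_of_gt hN0) h
      have := mul_left_cancel₀ (ne_of_gt hε) this
      linarith
    exact Fin.ext (by exact_mod_cast h2)
  set D : Set ℂ := Metric.ball (0 : ℂ) ε with hDdef
  set v : Fin N → (↥D → ℂ) := fun i x => ((1 - ((uu i : ℝ) : ℂ) * (x : ℂ)) ^ k)⁻¹ with hvdef
  set bas : (Fin r ⊕ Fin r) → (↥D → ℂ) :=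
    Sum.elim (fun j x => G j (x : ℂ)) (fun j x => F j (x : ℂ)) with hbasdef
  have huumem : ∀ i, ‖((uu i : ℝ) : ℂ)‖ < ε := by
    intro i; rw [Complex.norm_real, Real.norm_eq_abs, abs_of_pos (hupos i)]; exact hult i
  have huune : ∀ i, ((uu i : ℝ) : ℂ) ≠ 0 := fun i =>
    Complex.ofReal_ne_zero.mpr (ne_of_gt (hupos i))
  have hvmem : ∀ i, v i ∈ Submodule.span ℂ (Set.range bas) := by
    intro i
    have hvi : v i = (∑ j : Fin r, ((c j : ℂ) * f j ((uu i : ℝ) : ℂ)) • bas (Sum.inl j))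
        + ∑ j : Fin r, ((c j : ℂ) * g j ((uu i : ℝ) : ℂ)) • bas (Sum.inr j) := by
      funext x
      have hc := stepC ((uu i : ℝ) : ℂ) (huune i) (huumem i) (x : ℂ) x.2
      simp only [hvdef, Pi.add_apply, Finset.sum_apply, Pi.smul_apply, smul_eq_mul,
        hbasdef, Sum.elim_inl, Sum.elim_inr]
      rw [← hc]
      simp only [hΦdef]
      rw [← Finset.sum_add_distrib]
      apply Finset.sum_congr rfl
      intro j _
      ring
    rw [hvi]
    apply Submodule.add_mem
    all_goals
      apply Submodule.sum_mem
      intro j _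
      exact Submodule.smul_mem _ _ (Submodule.subset_span (Set.mem_range_self _))
  have hnli : ¬ LinearIndependent ℂ v := by
    intro hli
    set W := Submodule.span ℂ (Set.range bas) with hWdef
    haveI : Module.Finite ℂ W := Module.Finite.span_of_finite ℂ (Set.finite_range bas)
    have hli' : LinearIndependent ℂ (fun i => (⟨v i, hvmem i⟩ : W)) :=
      LinearIndependent.of_comp W.subtype hli
    have h1 : Fintype.card (Fin N) ≤ Module.finrank ℂ W := hli'.fintype_card_le_finrank
    have h2 : Module.finrank ℂ W ≤ Fintype.card (Fin r ⊕ Fin r) := by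
      have h3 := finrank_span_le_card (R := ℂ) (Set.range bas)
      rw [Set.toFinset_card] at h3
      exact h3.trans (Fintype.card_range_le bas)
    rw [Fintype.card_fin] at h1
    rw [Fintype.card_sum, Fintype.card_fin] at h2
    omega
  obtain ⟨lam, hlamsum, i0, hi0⟩ := Fintype.not_linearIndependent_iff.mp hnli
  have hpt : ∀ x ∈ Metric.ball (0 : ℂ) ε,
      ∑ i, lam i * ((1 - ((uu i : ℝ) : ℂ) * x) ^ k)⁻¹ = 0 := by
    intro x hx
    have := congrFun hlamsum (⟨x, hx⟩ : ↥D)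
    simpa [hvdef, smul_eq_mul] using this
  set P : ℂ → ℂ := fun x => ∑ i, lam i *
      ∏ j ∈ Finset.univ.erase i, (1 - ((uu j : ℝ) : ℂ) * x) ^ k with hPdef
  have hprod : ∀ s : Finset (Fin N),
      Differentiable ℂ (fun x : ℂ => ∏ j ∈ s, (1 - ((uu j : ℝ) : ℂ) * x) ^ k) := by
    intro s
    induction s using Finset.induction with
    | empty => simpa using differentiable_const (1 : ℂ)
    | @insert a s hnot ih =>
      have heq : (fun x : ℂ => ∏ j ∈ insert a s, (1 - ((uu j : ℝ) : ℂ) * x) ^ k)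
          = fun x => (1 - ((uu a : ℝ) : ℂ) * x) ^ k *
            ∏ j ∈ s, (1 - ((uu j : ℝ) : ℂ) * x) ^ k := by
        funext x; rw [Finset.prod_insert hnot]
      rw [heq]
      exact (((differentiable_const (1:ℂ)).sub (differentiable_id.const_mul _)).pow k).mul ih
  have hPdiff : Differentiable ℂ P := by
    intro x
    apply DifferentiableAt.fun_sum
    intro i _
    exact ((hprod (Finset.univ.erase i)) x).const_mul (lam i)
  have hPzero : ∀ x ∈ Metric.ball (0 : ℂ) ε, P x = 0 := by
    intro x hx
    have hne : ∀ i : Fin N, (1 - ((uu i : ℝ) : ℂ) * x) ^ k ≠ 0 := fun i =>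
      pow_ne_zero _ (hne1 _ _ (huumem i) (habs x hx))
    have hstep : ∀ i : Fin N, lam i * ∏ j ∈ Finset.univ.erase i, (1 - ((uu j : ℝ) : ℂ) * x) ^ k
        = (lam i * ((1 - ((uu i : ℝ) : ℂ) * x) ^ k)⁻¹) *
          ∏ j, (1 - ((uu j : ℝ) : ℂ) * x) ^ k := by
      intro i
      rw [← Finset.mul_prod_erase Finset.univ _ (Finset.mem_univ i)]
      rw [mul_assoc, ← mul_assoc (((1 - ((uu i : ℝ) : ℂ) * x) ^ k)⁻¹),
        inv_mul_cancel₀ (hne i), one_mul]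
    rw [hPdef]
    simp only
    rw [Finset.sum_congr rfl (fun i _ => hstep i), ← Finset.sum_mul, hpt x hx, zero_mul]
  have hPall : ∀ x : ℂ, P x = 0 := by
    have := (hPdiff.differentiableOn.analyticOnNhd
      isOpen_univ).eqOn_zero_of_preconnected_of_eventuallyEq_zero isPreconnected_univ
      (Set.mem_univ (0 : ℂ))
      (Filter.eventuallyEq_of_mem (Metric.ball_mem_nhds (0 : ℂ) hε) hPzero)
    intro x
    exact this (Set.mem_univ x)
  -- evaluate at the pole
  set x0 : ℂ := (((uu i0 : ℝ) : ℂ))⁻¹ with hx0def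
  have hPx0 : P x0 = lam i0 * ∏ j ∈ Finset.univ.erase i0, (1 - ((uu j : ℝ) : ℂ) * x0) ^ k := by
    rw [hPdef]
    simp only
    apply Finset.sum_eq_single_of_mem i0 (Finset.mem_univ i0)
    intro i _ hi
    have hmem0 : i0 ∈ Finset.univ.erase i := Finset.mem_erase.mpr ⟨Ne.symm hi, Finset.mem_univ _⟩
    rw [Finset.prod_eq_zero hmem0, mul_zero]
    rw [hx0def, mul_inv_cancel₀ (huune i0), sub_self]
    exact zero_pow (by omega)
  have hfac : ∏ j ∈ Finset.univ.erase i0, (1 - ((uu j : ℝ) : ℂ) * x0) ^ k ≠ 0 := by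
    rw [Finset.prod_ne_zero_iff]
    intro j hj
    apply pow_ne_zero
    intro h
    rw [sub_eq_zero, eq_comm, hx0def, mul_inv_eq_one₀ (huune i0)] at h
    have : uu j = uu i0 := by exact_mod_cast h
    exact (Finset.mem_erase.mp hj).1 (huinj this)
  have := hPall x0
  rw [hPx0] at this
  exact hi0 ((mul_eq_zero.mp this).resolve_right hfac)

end
end
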